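/- Define Ψ : (I → ℂ) → (I → ℂ) as follows: writing u k = (w k).re and y k = (w k).im, set Ψ w j = ↑(u j + (v j : ℝ) * Real.log (1 + Real.exp (u i))) + Complex.I * ↑(y j + (v j : ℝ) * y i * (1 + Real.exp (-(u i)))⁻¹) if j ≠ i and v j ≥ 0, Ψ w j = ↑(u j + (v j : ℝ) * Real.log (1 + Real.exp (-(u i)))) + Complex.I * ↑(y j - (v j : ℝ) * y i * (1 + Real.exp (u i))⁻¹) if j ≠ i and v j < 0, and Ψ w i = -(w i). Then Ψ is ℝ-differentiable at every point w : I → ℂ, and at every point w with (w i).im = 0 its Fréchet derivative is complex linear: for all h : I → ℂ, (fderiv ℝ Ψ w) (Complex.I • h) = Complex.I • (fderiv ℝ Ψ w) h. -/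

import Mathlib

variable {I : Type*} [Fintype I] [DecidableEq I]

/-- The tangent-bundle transition map of the log mutation at `i`, written in
complex coordinates `w k = u k + I * y k`. -/
noncomputable def PsiMut (i : I) (v : I → ℤ) (w : I → ℂ) : I → ℂ := fun j =>
  if j = i then -(w i)
  else if 0 ≤ v j then
    Complex.ofReal ((w j).re + (v j : ℝ) * Real.log (1 + Real.exp ((w i).re))) +
      Complex.I * Complex.ofReal
        ((w j).im + (v j : ℝ) * (w i).im * (1 + Real.exp (-((w i).re)))⁻¹)
  else
    Complex.ofReal ((w j).re + (v j : ℝ) * Real.log (1 + Real.exp (-((w i).re)))) +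
      Complex.I * Complex.ofReal
        ((w j).im - (v j : ℝ) * (w i).im * (1 + Real.exp ((w i).re))⁻¹)

/-!
Off the pivot, `Ψ w j = w j + v j * E (±w i)`, the sign being that of `v j`, with
`E (x + iy) = log (1 + eˣ) + i y σ(x)`, where the sigmoid `σ` is the derivative of
`log (1 + eˣ)`. A map `x + iy ↦ f x + i y f' x` agrees to first order with the holomorphic
extension of `f` along the real axis, so there its real derivative is multiplication by `f' x`.
Hence `dΨ` is `ℂ`-linear wherever `Im (w i) = 0`.
-/

open Real
open Complex (reCLM imCLM ofRealCLM)

noncomputable def imLinearExtension (f g : ℝ → ℝ) (z : ℂ) : ℂ :=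
  f z.re + Complex.I * (z.im * g z.re : ℝ)

theorem Differentiable.imLinearExtension {f g : ℝ → ℝ} (hf : Differentiable ℝ f)
    (hg : Differentiable ℝ g) : Differentiable ℝ (imLinearExtension f g) := by
  unfold _root_.imLinearExtension
  fun_prop

theorem hasFDerivAt_imLinearExtension {f g : ℝ → ℝ} {z : ℂ} (hz : z.im = 0)
    (hf : HasDerivAt f (g z.re) z.re) (hg : DifferentiableAt ℝ g z.re) :
    HasFDerivAt (imLinearExtension f g) ((g z.re • 1 : ℂ →L[ℂ] ℂ).restrictScalars ℝ) z := by
  have hre := hf.comp_hasFDerivAt z reCLM.hasFDerivAt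
  have him := imCLM.hasFDerivAt.mul (hg.hasFDerivAt.comp z reCLM.hasFDerivAt)
  have := (ofRealCLM.hasFDerivAt.comp z hre).add
    ((ofRealCLM.hasFDerivAt.comp z him).const_mul Complex.I)
  refine (show HasFDerivAt (imLinearExtension f g) _ z from this).congr_fderiv ?_
  ext1 h
  -- the term `im z * g' (re z) * re h` of the product rule vanishes
  apply Complex.ext <;> simp [hz]

theorem hasDerivAt_log_one_add_exp (x : ℝ) :
    HasDerivAt (fun x => log (1 + exp x)) (sigmoid x) x := by
  convert ((hasDerivAt_exp x).const_add 1).log (by positivity) using 1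
  rw [sigmoid_def, exp_neg]
  field_simp
  ring

theorem differentiable_log_one_add_exp : Differentiable ℝ fun x => log (1 + exp x) :=
  fun x => (hasDerivAt_log_one_add_exp x).differentiableAt

omit [Fintype I] in
theorem PsiMut_apply_of_ne {i j : I} (hj : j ≠ i) (v : I → ℤ) (w : I → ℂ) :
    PsiMut i v w j = w j + v j * imLinearExtension (fun x => log (1 + exp x)) sigmoid
      ((if 0 ≤ v j then 1 else -1 : ℝ) * w i) := by
  rw [PsiMut, if_neg hj]
  split_ifs with hv <;>
  · simp only [imLinearExtension, sigmoid_def, Complex.re_ofReal_mul, Complex.im_ofReal_mul, one_mul,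
      neg_one_mul, neg_neg]
    conv_rhs => rw [← Complex.re_add_im (w j)]
    push_cast
    ring

theorem hasFDerivAt_add_mul_comp {E : Type*} [NormedAddCommGroup E] [NormedSpace ℂ E]
    {p q : E →L[ℂ] ℂ} {Φ : ℂ → ℂ} {a c : ℂ} {x : E}
    (hΦ : HasFDerivAt Φ ((a • 1 : ℂ →L[ℂ] ℂ).restrictScalars ℝ) (q x)) :
    HasFDerivAt (fun y => p y + c * Φ (q y)) ((p + (c * a) • q).restrictScalars ℝ) x := by
  have := (p.restrictScalars ℝ).hasFDerivAt.add
    ((hΦ.comp x (q.restrictScalars ℝ).hasFDerivAt).const_mul c)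
  refine this.congr_fderiv ?_
  ext1 h
  simp only [ContinuousLinearMap.coe_restrictScalars', smul_apply, ContinuousLinearMap.comp_apply,
    one_apply_eq_self, smul_eq_mul, ContinuousLinearMap.restrictScalars_add, add_apply]
  ring

theorem PsiMut_hasFDerivAt_coord (i : I) (v : I → ℤ) {w : I → ℂ} (hw : (w i).im = 0) (j : I) :
    ∃ L : (I → ℂ) →L[ℂ] ℂ, HasFDerivAt (fun w => PsiMut i v w j) (L.restrictScalars ℝ) w := by
  by_cases hj : j = i
  · subst hj
    refine ⟨-ContinuousLinearMap.proj j, ?_⟩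
    simp only [PsiMut, if_pos]
    exact ((ContinuousLinearMap.proj j : (I → ℂ) →L[ℂ] ℂ).restrictScalars ℝ).hasFDerivAt.neg
  · let ε : ℝ := if 0 ≤ v j then 1 else -1
    have hεw : ((ε : ℂ) * w i).im = 0 := by simp [hw]
    have hΦ := hasFDerivAt_imLinearExtension hεw (hasDerivAt_log_one_add_exp _)
      differentiable_sigmoid.differentiableAt
    have := hasFDerivAt_add_mul_comp (p := ContinuousLinearMap.proj j)
      (q := (ε : ℂ) • ContinuousLinearMap.proj i) (c := v j) (x := w) hΦ
    simp_rw [PsiMut_apply_of_ne hj]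
    exact ⟨_, this⟩

theorem PsiMut_hasFDerivAt (i : I) (v : I → ℤ) {w : I → ℂ} (hw : (w i).im = 0) :
    ∃ L : (I → ℂ) →L[ℂ] (I → ℂ), HasFDerivAt (PsiMut i v) (L.restrictScalars ℝ) w := by
  choose L hL using PsiMut_hasFDerivAt_coord i v hw
  exact ⟨ContinuousLinearMap.pi L, hasFDerivAt_pi.2 hL⟩

theorem PsiMut_differentiable (i : I) (v : I → ℤ) : Differentiable ℝ (PsiMut i v) := by
  refine differentiable_pi.2 fun j => ?_
  by_cases hj : j = i
  · subst hj
    simp only [PsiMut, if_pos]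
    fun_prop
  · simp_rw [PsiMut_apply_of_ne hj]
    have := differentiable_log_one_add_exp.imLinearExtension differentiable_sigmoid
    fun_prop

theorem PsiMut_differentiable_and_complex_linear_deriv_general
    (i : I) (v : I → ℤ) :
    (∀ w : I → ℂ, DifferentiableAt ℝ (PsiMut i v) w) ∧
    ∀ w : I → ℂ, (w i).im = 0 → ∀ h : I → ℂ,
      (fderiv ℝ (PsiMut i v) w) (Complex.I • h) =
        Complex.I • (fderiv ℝ (PsiMut i v) w) h := by
  refine ⟨PsiMut_differentiable i v, fun w hw h => ?_⟩
  obtain ⟨L, hL⟩ := PsiMut_hasFDerivAt i v hw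
  rw [hL.fderiv]
  exact L.map_smul Complex.I h

/-- The tangent-bundle transition map is real-differentiable everywhere, and at
every point where the imaginary part of the pivot coordinate vanishes its
Fréchet derivative is complex linear. -/
theorem PsiMut_differentiable_and_complex_linear_deriv
    (i : I) (v : I → ℤ) (hvi : v i = 0) :
    (∀ w : I → ℂ, DifferentiableAt ℝ (PsiMut i v) w) ∧
    ∀ w : I → ℂ, (w i).im = 0 → ∀ h : I → ℂ,
      (fderiv ℝ (PsiMut i v) w) (Complex.I • h) =
        Complex.I • (fderiv ℝ (PsiMut i v) w) h :=
  PsiMut_differentiable_and_complex_linear_deriv_general i v
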